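/- (Lemma 1, bias part) In the multi-site regression model with weights τ_i = σ₁/σ_i, let Bias_β = E β̂ − β* = (Σ̂₁ᵏ)⁻¹ Σ_{i=2}^k n_iτ_i²Σ̂_i Δβ_i be the bias of the pooled estimator (the single-site OLS estimator on site 1 is unbiased). Then ‖Bias_β‖₂² ≤ ‖G^{-1/2}Δβ‖₂² · ‖(Σ̂₁ᵏ)⁻²(Σ̂₂ᵏ(n₁Σ̂₁)⁻¹Σ̂₂ᵏ + Σ̂₂ᵏ)‖_*. -/

import Mathlib

open Matrix

open scoped ComplexOrder in
/-- The square root of a positive semidefinite matrix, as `Matrix.PosSemidef.sqrt` was defined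
in Mathlib (Dec 2024): `U * diagonal (√λ) * Uᴴ` with `U` the eigenvector unitary. -/
noncomputable def Matrix.PosSemidef.sqrt {n 𝕜 : Type*} [Fintype n] [RCLike 𝕜] [DecidableEq n]
    {A : Matrix n n 𝕜} (hA : A.PosSemidef) : Matrix n n 𝕜 :=
  hA.1.eigenvectorUnitary.1 * diagonal ((↑) ∘ Real.sqrt ∘ hA.1.eigenvalues) *
    (star hA.1.eigenvectorUnitary : Matrix n n 𝕜)

/-- The nuclear norm of a real square matrix: the sum of its singular values,
i.e. `tr √(AᵀA)`. -/
noncomputable def nuclearNorm {d : Type*} [Fintype d] [DecidableEq d]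
    (A : Matrix d d ℝ) : ℝ :=
  (Matrix.posSemidef_conjTranspose_mul_self A).sqrt.trace

/-!
Writing `Wᵢ = nᵢτᵢ²Σ̂ᵢ` and `L = [W₂ ⋯ W_k]`, the bias is `(Σ̂₁ᵏ)⁻¹ L Δβ`. Inserting
`Δβ = G^{1/2} (G^{-1/2} Δβ)`, Cauchy–Schwarz row by row gives
`‖Bias_β‖² ≤ ‖G^{-1/2}Δβ‖² · tr((Σ̂₁ᵏ)⁻¹ L G Lᵀ (Σ̂₁ᵏ)⁻¹)`, and the block structure of `G`
makes `L G Lᵀ = Σ̂₂ᵏ(n₁Σ̂₁)⁻¹Σ̂₂ᵏ + Σ̂₂ᵏ`. Finally the trace of a matrix `M` is at most its nuclear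
norm: for an orthonormal eigenbasis `uᵢ` of `√(MᵀM)`, `⟨uᵢ, M uᵢ⟩ ≤ ‖M uᵢ‖ = ‖√(MᵀM) uᵢ‖`.
-/

open scoped InnerProductSpace

section Sqrt

open scoped ComplexOrder MatrixOrder

variable {n 𝕜 : Type*} [Fintype n] [RCLike 𝕜] [DecidableEq n] {A : Matrix n n 𝕜}

theorem Matrix.PosSemidef.sqrt_eq_cfcSqrt (hA : A.PosSemidef) : hA.sqrt = CFC.sqrt A := by
  rw [CFC.sqrt_eq_cfc, cfc_nnreal_eq_real _ A hA.nonneg, hA.1.cfc_eq, IsHermitian.cfc,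
    Unitary.conjStarAlgAut_apply, Matrix.PosSemidef.sqrt]
  congr 3
  funext i
  simp [max_eq_left (hA.eigenvalues_nonneg i)]

theorem Matrix.PosSemidef.posSemidef_sqrt (hA : A.PosSemidef) : hA.sqrt.PosSemidef := by
  rw [hA.sqrt_eq_cfcSqrt]
  exact (CFC.sqrt_nonneg A).posSemidef

theorem Matrix.PosSemidef.sqrt_mul_self (hA : A.PosSemidef) : hA.sqrt * hA.sqrt = A := by
  rw [hA.sqrt_eq_cfcSqrt]
  exact CFC.sqrt_mul_sqrt_self A hA.nonneg

end Sqrt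

section NuclearNorm

variable {𝕜 d : Type*} [RCLike 𝕜] [Fintype d] [DecidableEq d]

theorem Matrix.trace_eq_sum_inner_toEuclideanLin {ι : Type*} [Fintype ι] (A : Matrix d d 𝕜)
    (b : OrthonormalBasis ι 𝕜 (EuclideanSpace 𝕜 d)) :
    A.trace = ∑ i, ⟪b i, toEuclideanLin A (b i)⟫_𝕜 := by
  rw [← LinearMap.trace_eq_sum_inner, toEuclideanLin_eq_toLin_orthonormal,
    LinearMap.trace_eq_matrix_trace _ (EuclideanSpace.basisFun d 𝕜).toBasis,
    LinearMap.toMatrix_toLin]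

theorem Matrix.IsHermitian.toEuclideanLin_eigenvectorBasis {A : Matrix d d 𝕜}
    (hA : A.IsHermitian) (i : d) :
    toEuclideanLin A (hA.eigenvectorBasis i) = hA.eigenvalues i • hA.eigenvectorBasis i := by
  ext j
  simp [toLpLin_apply, hA.mulVec_eigenvectorBasis]

theorem Matrix.norm_toEuclideanLin_eq_of_conjTranspose_mul_self_eq {A B : Matrix d d 𝕜}
    (hB : B.IsHermitian) (h : Aᴴ * A = B * B) (x : EuclideanSpace 𝕜 d) :
    ‖toEuclideanLin A x‖ = ‖toEuclideanLin B x‖ := by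
  have norm_sq (M : Matrix d d 𝕜) :
      ‖toEuclideanLin M x‖ ^ 2 = RCLike.re ⟪x, toEuclideanLin (Mᴴ * M) x⟫_𝕜 := by
    rw [← inner_self_eq_norm_sq (𝕜 := 𝕜), ← LinearMap.adjoint_inner_right,
      ← toEuclideanLin_conjTranspose_eq_adjoint]
    simp
  rw [← sq_eq_sq₀ (norm_nonneg _) (norm_nonneg _), norm_sq, norm_sq, h, hB.eq]

theorem trace_le_nuclearNorm (A : Matrix d d ℝ) : A.trace ≤ nuclearNorm A := by
  have hAA := posSemidef_conjTranspose_mul_self A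
  have hB := hAA.posSemidef_sqrt
  set u := hB.1.eigenvectorBasis
  rw [nuclearNorm, hB.1.trace_eq_sum_eigenvalues, A.trace_eq_sum_inner_toEuclideanLin u]
  gcongr with i
  calc ⟪u i, toEuclideanLin A (u i)⟫_ℝ ≤ ‖u i‖ * ‖toEuclideanLin A (u i)‖ :=
        real_inner_le_norm _ _
    _ = ‖toEuclideanLin hAA.sqrt (u i)‖ := by
      rw [u.norm_eq_one, one_mul,
        norm_toEuclideanLin_eq_of_conjTranspose_mul_self_eq hB.1 hAA.sqrt_mul_self.symm]
    _ = hB.1.eigenvalues i := by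
      rw [hB.1.toEuclideanLin_eigenvectorBasis, norm_smul, u.norm_eq_one, mul_one,
        Real.norm_of_nonneg (hB.eigenvalues_nonneg i)]

end NuclearNorm

section CauchySchwarz

variable {m n : Type*} [Fintype m] [Fintype n]

theorem Matrix.sum_sq_mulVec_le (B : Matrix m n ℝ) (w : n → ℝ) :
    ∑ i, (B *ᵥ w) i ^ 2 ≤ (∑ j, w j ^ 2) * (B * Bᵀ).trace := by
  calc ∑ i, (B *ᵥ w) i ^ 2 ≤ ∑ i, (∑ j, w j ^ 2) * ∑ j, B i j ^ 2 :=
        Finset.sum_le_sum fun i _ => by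
          rw [mul_comm]
          exact Finset.sum_mul_sq_le_sq_mul_sq _ (B i) w
    _ = (∑ j, w j ^ 2) * (B * Bᵀ).trace := by
      simp [← Finset.mul_sum, Matrix.trace, Matrix.mul_apply, sq]

theorem Matrix.sum_sq_mulVec_le_mul_trace [DecidableEq n] (M : Matrix m n ℝ)
    {G T : Matrix n n ℝ} (hG : IsUnit G.det) (hT : T.IsSymm) (hTT : T * T = G⁻¹)
    (v : n → ℝ) :
    ∑ i, (M *ᵥ v) i ^ 2 ≤ (∑ j, (T *ᵥ v) j ^ 2) * (M * G * Mᵀ).trace := by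
  have hTdet : IsUnit T.det := by
    have : IsUnit (T.det * T.det) := by
      rw [← det_mul, hTT]
      exact isUnit_nonsing_inv_det _ hG
    exact isUnit_of_mul_isUnit_left this
  have hMv : M *ᵥ v = (M * T⁻¹) *ᵥ (T *ᵥ v) := by
    rw [mulVec_mulVec, Matrix.mul_assoc, nonsing_inv_mul _ hTdet, Matrix.mul_one]
  have hG' : T⁻¹ * (T⁻¹)ᵀ = G := by
    rw [transpose_nonsing_inv, hT.eq, ← mul_inv_rev, hTT, nonsing_inv_nonsing_inv _ hG]
  rw [hMv, ← hG', ← Matrix.mul_assoc, Matrix.mul_assoc _ _ Mᵀ, ← transpose_mul]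
  exact sum_sq_mulVec_le _ _

end CauchySchwarz

namespace Matrix

variable {ι m n α : Type*} [Fintype n]

def blockRow (W : ι → Matrix m n α) : Matrix m (ι × n) α :=
  of fun j q => W q.1 j q.2

variable [CommSemiring α]

theorem of_snd_snd_eq_blockRow_one [DecidableEq n] (C : Matrix n n α) :
    of (fun q r : ι × n => C q.2 r.2)
      = (blockRow (1 : ι → Matrix n n α))ᵀ * C * blockRow (1 : ι → Matrix n n α) := by
  ext q r
  simp [blockRow, mul_apply, one_apply]

variable [Fintype ι]

theorem blockRow_mulVec (W : ι → Matrix m n α) (v : ι × n → α) :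
    blockRow W *ᵥ v = ∑ i, W i *ᵥ fun j => v (i, j) := by
  ext j
  simp [blockRow, mulVec, dotProduct, Fintype.sum_prod_type, Finset.sum_apply]

theorem blockRow_mul_transpose_blockRow {l : Type*} (W : ι → Matrix m n α)
    (V : ι → Matrix l n α) : blockRow W * (blockRow V)ᵀ = ∑ i, W i * (V i)ᵀ := by
  ext j s
  simp [blockRow, mul_apply, Fintype.sum_prod_type, Matrix.sum_apply]

variable [DecidableEq ι]

theorem blockRow_mul_of_ite_eq (W : ι → Matrix m n α) (D : ι → Matrix n n α) :
    blockRow W * of (fun q r : ι × n => if q.1 = r.1 then D q.1 q.2 r.2 else 0)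
      = blockRow fun i => W i * D i := by
  ext j r
  simp [blockRow, mul_apply, Fintype.sum_prod_type]

theorem blockRow_mul_mul_transpose [DecidableEq n] (W : ι → Matrix m n α) (C : Matrix n n α)
    (D : ι → Matrix n n α) :
    blockRow W * of (fun q r : ι × n => C q.2 r.2 + if q.1 = r.1 then D q.1 q.2 r.2 else 0) *
        (blockRow W)ᵀ
      = (∑ i, W i) * C * (∑ i, W i)ᵀ + ∑ i, W i * D i * (W i)ᵀ := by
  have hsplit : of (fun q r : ι × n => C q.2 r.2 + if q.1 = r.1 then D q.1 q.2 r.2 else 0)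
      = of (fun q r : ι × n => C q.2 r.2) + of fun q r => if q.1 = r.1 then D q.1 q.2 r.2 else 0 :=
    rfl
  have hsum : blockRow W * (blockRow (1 : ι → Matrix n n α))ᵀ = ∑ i, W i := by
    simp [blockRow_mul_transpose_blockRow]
  rw [hsplit, Matrix.mul_add, Matrix.add_mul, blockRow_mul_of_ite_eq,
    blockRow_mul_transpose_blockRow, of_snd_snd_eq_blockRow_one, ← hsum]
  simp only [Matrix.mul_assoc, transpose_mul, transpose_transpose]

end Matrix

theorem Matrix.smul_mul_inv_mul_smul {n K : Type*} [Fintype n] [DecidableEq n] [Field K] (c : K)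
    {M : Matrix n n K} (hM : IsUnit M.det) : c • M * (c • M)⁻¹ * (c • M) = c • M := by
  rcases eq_or_ne c 0 with rfl | hc
  · simp
  · refine nonsing_inv_mul_cancel_right (A := c • M) _ ?_
    rw [det_smul]
    exact (hc.isUnit.pow _).mul hM

theorem Fin.sum_univ_erase_zero {M : Type*} [AddCommMonoid M] {k : ℕ} (f : Fin (k + 1) → M) :
    ∑ i ∈ Finset.univ.erase 0, f i = ∑ i : Fin k, f i.succ := by
  rw [Fin.univ_succ, Finset.erase_cons, Finset.sum_map]
  rfl

theorem sum_sq_inv_mul_blockRow_mulVec_le {ι d : Type*} [Fintype ι] [DecidableEq ι] [Fintype d]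
    [DecidableEq d] {A S : Matrix d d ℝ} {W : ι → Matrix d d ℝ} {G : Matrix (ι × d) (ι × d) ℝ}
    (hA : A.IsSymm) (hW : ∀ i, (W i).IsSymm) (hWW : ∀ i, W i * (W i)⁻¹ * W i = W i)
    (hS : S = ∑ i, W i)
    (hG : G = of fun q r => A⁻¹ q.2 r.2 + if q.1 = r.1 then (W q.1)⁻¹ q.2 r.2 else 0)
    (hGpd : G.PosDef) (v : ι × d → ℝ) :
    ∑ j, (((A + S)⁻¹ * blockRow W) *ᵥ v) j ^ 2
      ≤ (∑ q, (hGpd.inv.posSemidef.sqrt *ᵥ v) q ^ 2)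
        * nuclearNorm ((A + S)⁻¹ * (A + S)⁻¹ * (S * A⁻¹ * S + S)) := by
  have hSSymm : S.IsSymm := by simp only [hS, IsSymm, transpose_sum, (hW _).eq]
  have hS1 : (A + S)⁻¹.IsSymm := (hA.add hSSymm).inv
  have hLGL : blockRow W * G * (blockRow W)ᵀ = S * A⁻¹ * S + S := by
    rw [hG, blockRow_mul_mul_transpose W A⁻¹ fun i => (W i)⁻¹, ← hS, hSSymm.eq]
    congr 1
    rw [hS]
    exact Finset.sum_congr rfl fun i _ => by rw [(hW i).eq, hWW]
  set T := hGpd.inv.posSemidef.sqrt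
  have hT : T.IsSymm := isHermitian_iff_isSymm.mp hGpd.inv.posSemidef.posSemidef_sqrt.1
  calc _ ≤ (∑ q, (T *ᵥ v) q ^ 2)
          * ((A + S)⁻¹ * blockRow W * G * ((A + S)⁻¹ * blockRow W)ᵀ).trace :=
        sum_sq_mulVec_le_mul_trace _ hGpd.det_pos.ne'.isUnit hT
          hGpd.inv.posSemidef.sqrt_mul_self v
    _ = (∑ q, (T *ᵥ v) q ^ 2) * ((A + S)⁻¹ * (A + S)⁻¹ * (S * A⁻¹ * S + S)).trace := by
        rw [transpose_mul, hS1.eq, ← hLGL, ← trace_mul_cycle (A + S)⁻¹ _ (A + S)⁻¹]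
        simp only [Matrix.mul_assoc]
    _ ≤ _ := mul_le_mul_of_nonneg_left (trace_le_nuclearNorm _) (by positivity)

/-- Site `0` is the paper's site 1; the other sites, and the blocks of `G`, are indexed by
`Fin k` through `Fin.succ`. -/
theorem pooling_bias_bound_general (k p : ℕ) (n : Fin (k + 1) → ℕ)
    (X : ∀ i : Fin (k + 1), Matrix (Fin (n i)) (Fin p) ℝ)
    (Shat : Fin (k + 1) → Matrix (Fin p) (Fin p) ℝ)
    (hShat : ∀ i, (n i : ℝ) • Shat i = (X i)ᵀ * X i)
    (hinv : ∀ i, IsUnit (Shat i).det)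
    (Δβ : Fin (k + 1) → Fin p → ℝ)
    (σ : Fin (k + 1) → ℝ)
    (S2k S1k : Matrix (Fin p) (Fin p) ℝ)
    (hS2k : S2k = ∑ i ∈ Finset.univ.erase 0, ((n i : ℝ) * (σ 0 / σ i) ^ 2) • Shat i)
    (hS1k : S1k = (n 0 : ℝ) • Shat 0 + S2k)
    (Biasβ : Fin p → ℝ)
    (hBias : Biasβ = S1k⁻¹.mulVec
      (∑ i ∈ Finset.univ.erase 0,
        ((n i : ℝ) * (σ 0 / σ i) ^ 2) • (Shat i).mulVec (Δβ i)))
    (G : Matrix (Fin k × Fin p) (Fin k × Fin p) ℝ)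
    (hG : G = Matrix.of fun q r =>
      (((n 0 : ℝ) • Shat 0)⁻¹) q.2 r.2
        + if q.1 = r.1 then
            ((((n q.1.succ : ℝ) * (σ 0 / σ q.1.succ) ^ 2) • Shat q.1.succ)⁻¹) q.2 r.2
          else 0)
    (hGpd : G.PosDef) :
    ∑ j, (Biasβ j) ^ 2
      ≤ (∑ q, ((hGpd.inv.posSemidef.sqrt).mulVec (fun q => Δβ q.1.succ q.2) q) ^ 2)
        * nuclearNorm (S1k⁻¹ * S1k⁻¹ * (S2k * ((n 0 : ℝ) • Shat 0)⁻¹ * S2k + S2k)) := by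
  set W : Fin k → Matrix (Fin p) (Fin p) ℝ :=
    fun i => ((n i.succ : ℝ) * (σ 0 / σ i.succ) ^ 2) • Shat i.succ
  have hSymm (i : Fin (k + 1)) : ((n i : ℝ) • Shat i).IsSymm := by
    rw [hShat, IsSymm, transpose_mul, transpose_transpose]
  have hWSymm (i : Fin k) : (W i).IsSymm := by
    have := (hSymm i.succ).smul ((σ 0 / σ i.succ) ^ 2)
    rwa [smul_smul, mul_comm] at this
  have hS2 : S2k = ∑ i, W i := by rw [hS2k, Fin.sum_univ_erase_zero]
  have hBias' : Biasβ = (S1k⁻¹ * blockRow W) *ᵥ fun q => Δβ q.1.succ q.2 := by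
    rw [hBias, Fin.sum_univ_erase_zero, ← mulVec_mulVec, blockRow_mulVec]
    simp only [W, smul_mulVec]
  subst hS1k hBias'
  exact sum_sq_inv_mul_blockRow_mulVec_le (hSymm 0) hWSymm
    (fun i => smul_mul_inv_mul_smul _ (hinv _)) hS2 hG hGpd _

/-- **Lemma 1, bias part.** Multi-site regression with `k+1` sites
(site `0` is "site 1"), weights `τᵢ = σ₁/σᵢ`, `Σ̂₂ᵏ = Σ_{i≠1} nᵢτᵢ²Σ̂ᵢ`,
`Σ̂₁ᵏ = n₁Σ̂₁ + Σ̂₂ᵏ`.  The bias `Bias_β = (Σ̂₁ᵏ)⁻¹ Σ_{i≠1} nᵢτᵢ²Σ̂ᵢΔβᵢ` of the pooled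
estimator satisfies
`‖Bias_β‖₂² ≤ ‖G^{-1/2}Δβ‖₂² · ‖(Σ̂₁ᵏ)⁻²(Σ̂₂ᵏ(n₁Σ̂₁)⁻¹Σ̂₂ᵏ + Σ̂₂ᵏ)‖₊`, where `G` is the
block matrix with diagonal blocks `(n₁Σ̂₁)⁻¹ + (nᵢτᵢ²Σ̂ᵢ)⁻¹` and off-diagonal blocks
`(n₁Σ̂₁)⁻¹`, and `G^{-1/2} = √(G⁻¹)`. -/
theorem pooling_bias_bound (k p : ℕ) (n : Fin (k + 1) → ℕ) (hn : ∀ i, 0 < n i)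
    (X : ∀ i : Fin (k + 1), Matrix (Fin (n i)) (Fin p) ℝ)
    (Shat : Fin (k + 1) → Matrix (Fin p) (Fin p) ℝ)
    (hShat : ∀ i, (n i : ℝ) • Shat i = (X i)ᵀ * X i)
    (hinv : ∀ i, IsUnit (Shat i).det)
    (Δβ : Fin (k + 1) → Fin p → ℝ) (hΔβ0 : Δβ 0 = 0)
    (σ : Fin (k + 1) → ℝ) (hσ : ∀ i, 0 < σ i)
    (S2k S1k : Matrix (Fin p) (Fin p) ℝ)
    (hS2k : S2k = ∑ i ∈ Finset.univ.erase 0, ((n i : ℝ) * (σ 0 / σ i) ^ 2) • Shat i)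
    (hS1k : S1k = (n 0 : ℝ) • Shat 0 + S2k)
    (Biasβ : Fin p → ℝ)
    (hBias : Biasβ = S1k⁻¹.mulVec
      (∑ i ∈ Finset.univ.erase 0,
        ((n i : ℝ) * (σ 0 / σ i) ^ 2) • (Shat i).mulVec (Δβ i)))
    (G : Matrix (Fin k × Fin p) (Fin k × Fin p) ℝ)
    (hG : G = Matrix.of fun q r =>
      (((n 0 : ℝ) • Shat 0)⁻¹) q.2 r.2
        + if q.1 = r.1 then
            ((((n q.1.succ : ℝ) * (σ 0 / σ q.1.succ) ^ 2) • Shat q.1.succ)⁻¹) q.2 r.2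
          else 0)
    (hGpd : G.PosDef) :
    ∑ j, (Biasβ j) ^ 2
      ≤ (∑ q, ((hGpd.inv.posSemidef.sqrt).mulVec (fun q => Δβ q.1.succ q.2) q) ^ 2)
        * nuclearNorm (S1k⁻¹ * S1k⁻¹ * (S2k * ((n 0 : ℝ) • Shat 0)⁻¹ * S2k + S2k)) :=
  pooling_bias_bound_general k p n X Shat hShat hinv Δβ σ S2k S1k hS2k hS1k Biasβ hBias G hG hGpd
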